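/- Let A and B be positive semidefinite operators on H_𝒜 = ⊗_{a∈𝒜}H_a and H_ℬ = ⊗_{b∈ℬ}H_b respectively. Then the link product A * B = Tr_{𝒜∩ℬ}[ (1_{ℬ∖𝒜} ⊗ A^{T_{𝒜∩ℬ}})(B ⊗ 1_{𝒜∖ℬ}) ] is positive semidefinite. -/

import Mathlib

open Matrix Kronecker ComplexOrder

/-- Partial transpose over the common factor `γ` of an operator on `H_α ⊗ H_γ`. -/
def ptransposeA {α γ : Type*} (A : Matrix (α × γ) (α × γ) ℂ) : Matrix (α × γ) (α × γ) ℂ :=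
  Matrix.of fun p q => A (p.1, q.2) (q.1, p.2)

/-- Partial transpose over the common factor `γ` of an operator on `H_γ ⊗ H_β`. -/
def ptransposeB {γ β : Type*} (B : Matrix (γ × β) (γ × β) ℂ) : Matrix (γ × β) (γ × β) ℂ :=
  Matrix.of fun p q => B (q.1, p.2) (p.1, q.2)

/-- Partial trace over the middle factor `γ` of an operator on `(H_α ⊗ H_γ) ⊗ H_β`. -/
noncomputable def ptraceMid {α γ β : Type*} [Fintype γ] (M : Matrix ((α × γ) × β) ((α × γ) × β) ℂ) :
    Matrix (α × β) (α × β) ℂ :=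
  Matrix.of fun x y => ∑ c : γ, M ((x.1, c), x.2) ((y.1, c), y.2)

/-- The link product `A * B = Tr_γ[(A^{T_γ} ⊗ 1_β)(1_α ⊗ B)]` of
`A` on `H_α ⊗ H_γ` and `B` on `H_γ ⊗ H_β` (common spaces `γ = 𝒜 ∩ ℬ`). -/
noncomputable def linkProduct {α γ β : Type*} [Fintype α] [Fintype γ] [Fintype β]
    [DecidableEq α] [DecidableEq β]
    (A : Matrix (α × γ) (α × γ) ℂ) (B : Matrix (γ × β) (γ × β) ℂ) :
    Matrix (α × β) (α × β) ℂ :=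
  ptraceMid ((ptransposeA A ⊗ₖ (1 : Matrix β β ℂ)) *
    (Matrix.reindex (Equiv.prodAssoc α γ β).symm (Equiv.prodAssoc α γ β).symm
      ((1 : Matrix α α ℂ) ⊗ₖ B)))

/-- The link product computed in the other order,
`B * A = Tr_γ[(1_α ⊗ B^{T_γ})(A ⊗ 1_β)]`. -/
noncomputable def linkProduct' {α γ β : Type*} [Fintype α] [Fintype γ] [Fintype β]
    [DecidableEq α] [DecidableEq β]
    (B : Matrix (γ × β) (γ × β) ℂ) (A : Matrix (α × γ) (α × γ) ℂ) :
    Matrix (α × β) (α × β) ℂ :=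
  ptraceMid ((Matrix.reindex (Equiv.prodAssoc α γ β).symm (Equiv.prodAssoc α γ β).symm
    ((1 : Matrix α α ℂ) ⊗ₖ ptransposeB B)) * (A ⊗ₖ (1 : Matrix β β ℂ)))

/-!
Writing `|Ω⟩ = ∑_c |c⟩|c⟩` for the unnormalised maximally entangled vector on the two copies of
`H_γ`, the link product is the compression `(1_α ⊗ ⟨Ω| ⊗ 1_β) (A ⊗ B) (1_α ⊗ |Ω⟩ ⊗ 1_β)`: the
partial transpose of `A` is exactly what contracting with `|Ω⟩` produces. A compression of the
positive operator `A ⊗ B` is positive.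
-/

theorem linkProduct_apply {α γ β : Type*} [Fintype α] [Fintype γ] [Fintype β]
    [DecidableEq α] [DecidableEq β]
    (A : Matrix (α × γ) (α × γ) ℂ) (B : Matrix (γ × β) (γ × β) ℂ) (x y : α × β) :
    linkProduct A B x y = ∑ c : γ, ∑ c' : γ, A (x.1, c') (y.1, c) * B (c', x.2) (c, y.2) := by
  simp [linkProduct, ptraceMid, ptransposeA, Matrix.mul_apply, Matrix.one_apply,
    Fintype.sum_prod_type, mul_ite, ite_mul, Equiv.prodAssoc]

def maxEntangledEmbedding (α γ β : Type*) [DecidableEq α] [DecidableEq γ] [DecidableEq β] :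
    Matrix ((α × γ) × (γ × β)) (α × β) ℂ :=
  Matrix.of fun p x => if p.1.1 = x.1 ∧ p.1.2 = p.2.1 ∧ p.2.2 = x.2 then 1 else 0

theorem linkProduct_eq_conjTranspose_mul_kronecker_mul {α γ β : Type*}
    [Fintype α] [Fintype γ] [Fintype β] [DecidableEq α] [DecidableEq γ] [DecidableEq β]
    (A : Matrix (α × γ) (α × γ) ℂ) (B : Matrix (γ × β) (γ × β) ℂ) :
    linkProduct A B =
      (maxEntangledEmbedding α γ β)ᴴ * (A ⊗ₖ B) * maxEntangledEmbedding α γ β := by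
  ext x y
  rw [linkProduct_apply]
  simp [maxEntangledEmbedding, Matrix.mul_apply, Fintype.sum_prod_type, ite_and,
    apply_ite (starRingEnd ℂ), ite_mul, mul_ite]

/-- The link product of positive semidefinite operators is positive semidefinite. -/
theorem stmt_8 {α γ β : Type*} [Fintype α] [Fintype γ] [Fintype β]
    [DecidableEq α] [DecidableEq β]
    (A : Matrix (α × γ) (α × γ) ℂ) (B : Matrix (γ × β) (γ × β) ℂ)
    (hA : A.PosSemidef) (hB : B.PosSemidef) :
    (linkProduct A B).PosSemidef := by
  classical
  rw [linkProduct_eq_conjTranspose_mul_kronecker_mul]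
  exact (hA.kronecker hB).conjTranspose_mul_mul_same _
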